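/- Embed ℂ^m ⊗ ℂ^{n₁} as the left-block subspace L of m × (n₁+n₂) matrices and ℂ^m ⊗ ℂ^{n₂} as the right-block subspace R. If S_L is an unextendible product basis of L and S_R is a complete orthonormal basis of R consisting of rank-1 matrices, then S_L ∪ S_R is an unextendible product basis of ℂ^m ⊗ ℂ^{n₁+n₂}. -/

import Mathlib

/-- The Frobenius (Hilbert–Schmidt) inner product on complex matrices. -/
noncomputable def frob {a b : ℕ} (M N : Matrix (Fin a) (Fin b) ℂ) : ℂ :=
  ∑ i, ∑ j, star (M i j) * N i j

/-- An unextendible product basis of `ℂ^a ⊗ ℂ^b`, viewed as `a × b` complex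
matrices with the Frobenius inner product. -/
def IsUPB {a b : ℕ} (S : Finset (Matrix (Fin a) (Fin b) ℂ)) : Prop :=
  (∀ M ∈ S, M.rank = 1) ∧
  (∀ M ∈ S, ∀ N ∈ S, frob M N = if M = N then 1 else 0) ∧
  S.card < a * b ∧
  ∀ N : Matrix (Fin a) (Fin b) ℂ, N ≠ 0 → (∀ M ∈ S, frob M N = 0) → 2 ≤ N.rank

/-- A complete orthonormal product basis of `ℂ^a ⊗ ℂ^b`: an orthonormal basis
(`a * b` pairwise orthonormal matrices) all of whose members have rank 1. -/
def IsCompleteProductBasis {a b : ℕ} (S : Finset (Matrix (Fin a) (Fin b) ℂ)) : Prop :=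
  (∀ M ∈ S, M.rank = 1) ∧
  (∀ M ∈ S, ∀ N ∈ S, frob M N = if M = N then 1 else 0) ∧
  S.card = a * b

/-- Embedding of `ℂ^m ⊗ ℂ^{n₁}` as the matrices supported on the first `n₁` columns. -/
def embedL {m n₁ n₂ : ℕ} (A : Matrix (Fin m) (Fin n₁) ℂ) :
    Matrix (Fin m) (Fin (n₁ + n₂)) ℂ :=
  Matrix.of fun i j => if h : (j : ℕ) < n₁ then A i ⟨j, h⟩ else 0

/-- Embedding of `ℂ^m ⊗ ℂ^{n₂}` as the matrices supported on the last `n₂` columns. -/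
def embedR {m n₁ n₂ : ℕ} (A : Matrix (Fin m) (Fin n₂) ℂ) :
    Matrix (Fin m) (Fin (n₁ + n₂)) ℂ :=
  Matrix.of fun i j => if h : (j : ℕ) < n₁ then 0
    else A i ⟨(j : ℕ) - n₁, by have := j.isLt; omega⟩

/-!
Embedding into the left or right block preserves rank and Frobenius products, and the two blocks
are orthogonal, so the union is orthonormal and has `|S_L| + m n₂ < m (n₁ + n₂)` elements. A
matrix orthogonal to the union has zero right block, because the orthonormal `S_R` of full size
spans that block; it is therefore the embedding of its left block, which is orthogonal to `S_L`
and hence has rank at least 2.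
-/

open Matrix

theorem Matrix.rank_le_rank_of_forall_col_eq_zero_or_eq_col {R m n n' : Type*} [Field R]
    [Fintype m] [Fintype n] [Fintype n'] {M : Matrix m n R} {N : Matrix m n' R}
    (h : ∀ j, N.col j = 0 ∨ ∃ k, N.col j = M.col k) : N.rank ≤ M.rank := by
  rw [rank_eq_finrank_span_cols, rank_eq_finrank_span_cols]
  refine Submodule.finrank_mono (Submodule.span_le.2 ?_)
  rintro _ ⟨j, rfl⟩
  rcases h j with h0 | ⟨k, hk⟩
  · rw [h0]; exact zero_mem _
  · rw [hk]; exact Submodule.subset_span ⟨k, rfl⟩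

section Frobenius
variable {a b : ℕ}

theorem frob_eq_inner (M N : Matrix (Fin a) (Fin b) ℂ) :
    frob M N = inner ℂ (WithLp.toLp 2 M.vec) (WithLp.toLp 2 N.vec) := by
  rw [PiLp.inner_apply, Fintype.sum_prod_type, Finset.sum_comm]
  simp [frob, mul_comm]

@[simp]
theorem frob_zero_right (M : Matrix (Fin a) (Fin b) ℂ) : frob M 0 = 0 := by
  simp [frob]

theorem eq_zero_of_forall_frob_eq_zero {S : Finset (Matrix (Fin a) (Fin b) ℂ)}
    (hS : ∀ M ∈ S, ∀ N ∈ S, frob M N = if M = N then 1 else 0) (hcard : S.card = a * b)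
    {N : Matrix (Fin a) (Fin b) ℂ} (hN : ∀ M ∈ S, frob M N = 0) : N = 0 := by
  let v : S → EuclideanSpace ℂ (Fin b × Fin a) := fun M => WithLp.toLp 2 M.1.vec
  have hv : Orthonormal ℂ v := by
    refine orthonormal_iff_ite.2 fun M M' => ?_
    rw [← frob_eq_inner, hS M M.2 M' M'.2]
    exact if_congr Subtype.ext_iff.symm rfl rfl
  have hspan : Submodule.span ℂ (Set.range v) = ⊤ :=
    hv.linearIndependent.span_eq_top_of_card_eq_finrank' (by simp [hcard, mul_comm])
  have hortho : Submodule.span ℂ (Set.range v) ⟂ Submodule.span ℂ {WithLp.toLp 2 N.vec} := by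
    refine Submodule.isOrtho_span.2 ?_
    rintro _ ⟨M, rfl⟩ _ rfl
    rw [← frob_eq_inner, hN M M.2]
  rw [hspan, Submodule.isOrtho_top_left, Submodule.span_singleton_eq_bot] at hortho
  simpa using hortho

end Frobenius

section Blocks
variable {m n₁ n₂ : ℕ}

@[simp]
theorem embedL_apply_castAdd (A : Matrix (Fin m) (Fin n₁) ℂ) (i : Fin m) (j : Fin n₁) :
    embedL (n₂ := n₂) A i (Fin.castAdd n₂ j) = A i j := by
  simp [embedL]

@[simp]
theorem embedL_apply_natAdd (A : Matrix (Fin m) (Fin n₁) ℂ) (i : Fin m) (j : Fin n₂) :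
    embedL A i (Fin.natAdd n₁ j) = 0 := by
  simp [embedL]

@[simp]
theorem embedR_apply_castAdd (B : Matrix (Fin m) (Fin n₂) ℂ) (i : Fin m) (j : Fin n₁) :
    embedR B i (Fin.castAdd n₂ j) = 0 := by
  simp [embedR]

@[simp]
theorem embedR_apply_natAdd (B : Matrix (Fin m) (Fin n₂) ℂ) (i : Fin m) (j : Fin n₂) :
    embedR (n₁ := n₁) B i (Fin.natAdd n₁ j) = B i j := by
  simp [embedR]

@[simp]
theorem submatrix_embedL_castAdd (A : Matrix (Fin m) (Fin n₁) ℂ) :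
    (embedL (n₂ := n₂) A).submatrix id (Fin.castAdd n₂) = A := by
  ext; simp

@[simp]
theorem submatrix_embedL_natAdd (A : Matrix (Fin m) (Fin n₁) ℂ) :
    (embedL (n₂ := n₂) A).submatrix id (Fin.natAdd n₁) = 0 := by
  ext; simp

@[simp]
theorem submatrix_embedR_castAdd (B : Matrix (Fin m) (Fin n₂) ℂ) :
    (embedR (n₁ := n₁) B).submatrix id (Fin.castAdd n₂) = 0 := by
  ext; simp

@[simp]
theorem submatrix_embedR_natAdd (B : Matrix (Fin m) (Fin n₂) ℂ) :
    (embedR (n₁ := n₁) B).submatrix id (Fin.natAdd n₁) = B := by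
  ext; simp

theorem embedL_injective : Function.Injective (embedL (m := m) (n₁ := n₁) (n₂ := n₂)) :=
  fun A A' h => by rw [← submatrix_embedL_castAdd A, h, submatrix_embedL_castAdd]

theorem embedR_injective : Function.Injective (embedR (m := m) (n₁ := n₁) (n₂ := n₂)) :=
  fun B B' h => by rw [← submatrix_embedR_natAdd B, h, submatrix_embedR_natAdd]

theorem embedL_ne_embedR {A : Matrix (Fin m) (Fin n₁) ℂ} (hA : A ≠ 0)
    (B : Matrix (Fin m) (Fin n₂) ℂ) : embedL A ≠ embedR B := fun h =>
  hA (by rw [← submatrix_embedL_castAdd (n₂ := n₂) A, h, submatrix_embedR_castAdd])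

theorem embedL_submatrix_castAdd {N : Matrix (Fin m) (Fin (n₁ + n₂)) ℂ}
    (h : N.submatrix id (Fin.natAdd n₁) = 0) : embedL (N.submatrix id (Fin.castAdd n₂)) = N := by
  ext i j
  induction j using Fin.addCases with
  | left j => simp
  | right j => simpa using (congr_fun (congr_fun h i) j).symm

@[simp]
theorem rank_embedL (A : Matrix (Fin m) (Fin n₁) ℂ) : (embedL (n₂ := n₂) A).rank = A.rank := by
  refine le_antisymm (rank_le_rank_of_forall_col_eq_zero_or_eq_col fun j => ?_)
    (rank_le_rank_of_forall_col_eq_zero_or_eq_col fun k => Or.inr ⟨Fin.castAdd n₂ k, ?_⟩)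
  · induction j using Fin.addCases with
    | left k => exact Or.inr ⟨k, by ext; simp [col]⟩
    | right k => exact Or.inl (by ext; simp [col])
  · ext; simp [col]

@[simp]
theorem rank_embedR (B : Matrix (Fin m) (Fin n₂) ℂ) : (embedR (n₁ := n₁) B).rank = B.rank := by
  refine le_antisymm (rank_le_rank_of_forall_col_eq_zero_or_eq_col fun j => ?_)
    (rank_le_rank_of_forall_col_eq_zero_or_eq_col fun k => Or.inr ⟨Fin.natAdd n₁ k, ?_⟩)
  · induction j using Fin.addCases with
    | left k => exact Or.inl (by ext; simp [col])
    | right k => exact Or.inr ⟨k, by ext; simp [col]⟩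
  · ext; simp [col]

theorem frob_embedL (A : Matrix (Fin m) (Fin n₁) ℂ) (N : Matrix (Fin m) (Fin (n₁ + n₂)) ℂ) :
    frob (embedL A) N = frob A (N.submatrix id (Fin.castAdd n₂)) := by
  simp [frob, Fin.sum_univ_add]

theorem frob_embedR (B : Matrix (Fin m) (Fin n₂) ℂ) (N : Matrix (Fin m) (Fin (n₁ + n₂)) ℂ) :
    frob (embedR B) N = frob B (N.submatrix id (Fin.natAdd n₁)) := by
  simp [frob, Fin.sum_univ_add]

end Blocks

section Union
variable {m n₁ n₂ : ℕ} {S_L : Finset (Matrix (Fin m) (Fin n₁) ℂ)}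
  {S_R : Finset (Matrix (Fin m) (Fin n₂) ℂ)}

theorem card_image_embedL_union_image_embedR (hL₀ : ∀ A ∈ S_L, A ≠ 0) :
    (S_L.image (embedL (n₂ := n₂)) ∪ S_R.image (embedR (n₁ := n₁))).card =
      S_L.card + S_R.card := by
  rw [Finset.card_union_of_disjoint, Finset.card_image_of_injective _ embedL_injective,
    Finset.card_image_of_injective _ embedR_injective]
  simp only [Finset.disjoint_left, Finset.mem_image]
  rintro _ ⟨A, hA, rfl⟩ ⟨B, -, hB⟩
  exact embedL_ne_embedR (hL₀ A hA) B hB.symm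

theorem frob_image_embedL_union_image_embedR
    (hL : ∀ A ∈ S_L, ∀ A' ∈ S_L, frob A A' = if A = A' then 1 else 0)
    (hR : ∀ B ∈ S_R, ∀ B' ∈ S_R, frob B B' = if B = B' then 1 else 0) (hL₀ : ∀ A ∈ S_L, A ≠ 0) :
    ∀ M ∈ S_L.image (embedL (n₂ := n₂)) ∪ S_R.image (embedR (n₁ := n₁)),
    ∀ N ∈ S_L.image (embedL (n₂ := n₂)) ∪ S_R.image (embedR (n₁ := n₁)),
      frob M N = if M = N then 1 else 0 := by
  simp only [Finset.mem_union, Finset.mem_image]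
  rintro _ (⟨A, hA, rfl⟩ | ⟨B, hB, rfl⟩) _ (⟨A', hA', rfl⟩ | ⟨B', hB', rfl⟩)
  · simp [frob_embedL, hL A hA A' hA', embedL_injective.eq_iff]
  · simp [frob_embedL, embedL_ne_embedR (hL₀ A hA) B']
  · simp [frob_embedR, (embedL_ne_embedR (hL₀ A' hA') B).symm]
  · simp [frob_embedR, hR B hB B' hB', embedR_injective.eq_iff]

end Union

/-- If `S_L` is a UPB of the left block `ℂ^m ⊗ ℂ^{n₁}` and `S_R` is a complete
orthonormal basis of the right block `ℂ^m ⊗ ℂ^{n₂}` consisting of rank-1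
matrices, then their union is a UPB of `ℂ^m ⊗ ℂ^{n₁+n₂}`. -/
theorem union_UPB_with_complete_basis_is_UPB {m n₁ n₂ : ℕ}
    (S_L : Finset (Matrix (Fin m) (Fin n₁) ℂ))
    (S_R : Finset (Matrix (Fin m) (Fin n₂) ℂ))
    (hL : IsUPB S_L) (hR : IsCompleteProductBasis S_R) :
    IsUPB (S_L.image (embedL (n₂ := n₂)) ∪ S_R.image (embedR (n₁ := n₁))) := by
  obtain ⟨hL_rank, hL_orth, hL_card, hL_unext⟩ := hL
  obtain ⟨hR_rank, hR_orth, hR_card⟩ := hR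
  have hL_ne : ∀ A ∈ S_L, A ≠ 0 := fun A hA h0 => by simpa [h0] using hL_rank A hA
  refine ⟨?_, frob_image_embedL_union_image_embedR hL_orth hR_orth hL_ne, ?_, ?_⟩
  · simp only [Finset.mem_union, Finset.mem_image]
    rintro _ (⟨A, hA, rfl⟩ | ⟨B, hB, rfl⟩)
    · rw [rank_embedL, hL_rank A hA]
    · rw [rank_embedR, hR_rank B hB]
  · rw [card_image_embedL_union_image_embedR hL_ne, mul_add]
    omega
  · intro N hN hperp
    have hperpL : ∀ A ∈ S_L, frob A (N.submatrix id (Fin.castAdd n₂)) = 0 := fun A hA =>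
      frob_embedL A N ▸ hperp _ (Finset.mem_union_left _ (Finset.mem_image_of_mem _ hA))
    have hperpR : ∀ B ∈ S_R, frob B (N.submatrix id (Fin.natAdd n₁)) = 0 := fun B hB =>
      frob_embedR B N ▸ hperp _ (Finset.mem_union_right _ (Finset.mem_image_of_mem _ hB))
    have hNL := embedL_submatrix_castAdd (eq_zero_of_forall_frob_eq_zero hR_orth hR_card hperpR)
    rw [← hNL, rank_embedL]
    refine hL_unext _ (fun h0 => hN ?_) hperpL
    rw [← hNL, h0]
    ext; simp [embedL]
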